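/- arXiv:2511.00937 — 3 statements merged into one kernel-verified Lean document; each statement's English description precedes it below -/
import Mathlib

section
/- If L : X × X → ℝ is a symmetric strongly negative definite kernel and μ, ν are probability measures in B_L with N(μ,ν) = 0, then μ = ν. -/
open MeasureTheory
open scoped ENNReal NNReal

private lemma nnsmul_eq {Y : Type*} [MeasurableSpace Y] (c : ℝ≥0) (m : Measure Y) :
    c • m = ((c : ℝ≥0∞)) • m := by
  ext s hs
  simp only [Measure.smul_apply, ENNReal.smul_def]

private lemma smul_prod_smul {X : Type*} [MeasurableSpace X]
    (α β : Measure X) [IsFiniteMeasure α] [IsFiniteMeasure β] (c : ℝ≥0) :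
    (c • α).prod (c • β) = (c * c) • (α.prod β) := by
  refine Measure.prod_eq fun s t hs ht => ?_
  simp only [Measure.prod_prod, Measure.smul_apply, ENNReal.smul_def, ENNReal.coe_mul,
    smul_eq_mul]
  ring

private lemma aux_int {X : Type*} [MeasurableSpace X] (L : X → X → ℝ)
    (ρ α β : Measure X) [IsFiniteMeasure ρ] [IsFiniteMeasure α] [IsFiniteMeasure β]
    (hα : α ≪ ρ) (hβ : β ≪ ρ)
    (hint : Integrable
      (fun p : X × X => L p.1 p.2 * (α.rnDeriv ρ p.1).toReal * (β.rnDeriv ρ p.2).toReal)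
      (ρ.prod ρ))
    (hαβ : Integrable (fun p : X × X => L p.1 p.2) (α.prod β)) :
    ∫ p, L p.1 p.2 * (α.rnDeriv ρ p.1).toReal * (β.rnDeriv ρ p.2).toReal ∂(ρ.prod ρ)
      = ∫ p, L p.1 p.2 ∂(α.prod β) := by
  rw [MeasureTheory.integral_prod _ hint, MeasureTheory.integral_prod _ hαβ]
  have hmid : ∀ x : X,
      ∫ y, L x y * (α.rnDeriv ρ x).toReal * (β.rnDeriv ρ y).toReal ∂ρ
        = (α.rnDeriv ρ x).toReal • ∫ y, L x y ∂β := by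
    intro x
    have e1 : (fun y => L x y * (α.rnDeriv ρ x).toReal * (β.rnDeriv ρ y).toReal)
        = fun y => (β.rnDeriv ρ y).toReal • (L x y * (α.rnDeriv ρ x).toReal) := by
      funext y; simp only [smul_eq_mul]; ring
    rw [e1, integral_rnDeriv_smul hβ, integral_mul_const, smul_eq_mul]
    ring
  calc ∫ x, ∫ y, L x y * (α.rnDeriv ρ x).toReal * (β.rnDeriv ρ y).toReal ∂ρ ∂ρ
      = ∫ x, (α.rnDeriv ρ x).toReal • ∫ y, L x y ∂β ∂ρ := by
        exact integral_congr_ae (Filter.Eventually.of_forall hmid)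
    _ = ∫ x, ∫ y, L x y ∂β ∂α := integral_rnDeriv_smul hα

theorem stmt_1 {X : Type*} [MeasurableSpace X] (L : X → X → ℝ)
    (hsymm : ∀ x y, L x y = L y x)
    (hneg : ∀ (n : ℕ) (w : Fin n → ℝ), (∑ i, w i) = 0 → ∀ x : Fin n → X,
      (∑ i, ∑ j, L (x i) (x j) * w i * w j) ≤ 0)
    (hstrong : ∀ (ρ : Measure X), IsProbabilityMeasure ρ →
      ∀ f : X → ℝ, Measurable f → (∫ x, f x ∂ρ) = 0 →
      Integrable (fun p : X × X => L p.1 p.2 * f p.1 * f p.2) (ρ.prod ρ) →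
      (∫ p, L p.1 p.2 * f p.1 * f p.2 ∂(ρ.prod ρ)) = 0 →
      f =ᵐ[ρ] 0)
    (μ ν : Measure X) [IsProbabilityMeasure μ] [IsProbabilityMeasure ν]
    (hμν : Integrable (fun p : X × X => L p.1 p.2) (μ.prod ν))
    (hμμ : Integrable (fun p : X × X => L p.1 p.2) (μ.prod μ))
    (hνν : Integrable (fun p : X × X => L p.1 p.2) (ν.prod ν))
    (hzero : 2 * ∫ p, L p.1 p.2 ∂(μ.prod ν)
      - ∫ p, L p.1 p.2 ∂(μ.prod μ)
      - ∫ p, L p.1 p.2 ∂(ν.prod ν) = 0) :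
    μ = ν := by
  classical
  set ρ : Measure X := ((2:ℝ≥0)⁻¹) • (μ + ν) with hρdef
  have hρen : ρ = ((((2:ℝ≥0)⁻¹ : ℝ≥0)) : ℝ≥0∞) • (μ + ν) := by rw [hρdef, nnsmul_eq]
  have hcne : ((((2:ℝ≥0)⁻¹ : ℝ≥0)) : ℝ≥0∞) ≠ 0 := by simp
  have hρprob : IsProbabilityMeasure ρ := by
    constructor
    rw [hρen]
    simp only [Measure.smul_apply, Measure.add_apply, measure_univ, smul_eq_mul]
    rw [one_add_one_eq_two, ENNReal.coe_inv (by norm_num), ENNReal.coe_ofNat]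
    exact ENNReal.inv_mul_cancel (by norm_num) ENNReal.ofNat_ne_top
  -- absolute continuity
  have hsumρ : (μ + ν) ≪ ρ := by
    rw [hρen]; exact Measure.absolutelyContinuous_smul hcne
  have hμρ : μ ≪ ρ :=
    (Measure.absolutelyContinuous_of_le (Measure.le_add_right le_rfl)).trans hsumρ
  have hνρ : ν ≪ ρ :=
    (Measure.absolutelyContinuous_of_le (Measure.le_add_left le_rfl)).trans hsumρ
  set g : X → ℝ := fun x => (μ.rnDeriv ρ x).toReal with hgdef
  set h : X → ℝ := fun x => (ν.rnDeriv ρ x).toReal with hhdef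
  -- a.e. bounds
  have hbound : ∀ (α : Measure X), IsFiniteMeasure α → α ≤ μ + ν →
      ∀ᵐ x ∂ρ, (α.rnDeriv ρ x).toReal ≤ 2 := by
    intro α hαp hαle
    have hle : ((2:ℝ≥0)⁻¹) • α ≤ ρ := by
      rw [hρdef]
      intro s
      simp only [Measure.smul_apply, ENNReal.smul_def, smul_eq_mul]
      exact mul_le_mul_right (hαle s) _
    have h1 : (((2:ℝ≥0)⁻¹) • α).rnDeriv ρ ≤ᵐ[ρ] 1 := Measure.rnDeriv_le_one_of_le hle
    have h2' : (((2:ℝ≥0)⁻¹) • α).rnDeriv ρ =ᵐ[ρ] ((2:ℝ≥0)⁻¹) • α.rnDeriv ρ :=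
      Measure.rnDeriv_smul_left α ρ _
    filter_upwards [h1, h2', Measure.rnDeriv_lt_top α ρ] with x hx1 hx2 hx3
    rw [hx2] at hx1
    simp only [Pi.smul_apply, Pi.one_apply, ENNReal.smul_def, smul_eq_mul] at hx1
    have hd : α.rnDeriv ρ x ≤ 2 := by
      have hm := mul_le_mul_right hx1 (((2:ℝ≥0)) : ℝ≥0∞)
      rw [← mul_assoc, mul_one] at hm
      rwa [show (((2:ℝ≥0)):ℝ≥0∞) * (((2:ℝ≥0)⁻¹ : ℝ≥0) : ℝ≥0∞) = 1 by
        rw [← ENNReal.coe_mul]; norm_num, one_mul,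
        show (((2:ℝ≥0)):ℝ≥0∞) = (2:ℝ≥0∞) from ENNReal.coe_ofNat 2] at hm
    calc (α.rnDeriv ρ x).toReal ≤ (2:ℝ≥0∞).toReal :=
          ENNReal.toReal_mono (by norm_num) hd
      _ = 2 := by norm_num
  have hgb : ∀ᵐ x ∂ρ, g x ≤ 2 := hbound μ inferInstance (Measure.le_add_right le_rfl)
  have hhb : ∀ᵐ x ∂ρ, h x ≤ 2 := hbound ν inferInstance (Measure.le_add_left le_rfl)
  have hg0 : ∀ x, 0 ≤ g x := fun x => ENNReal.toReal_nonneg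
  have hh0 : ∀ x, 0 ≤ h x := fun x => ENNReal.toReal_nonneg
  -- integrability of L on ν.prod μ
  have hνμ : Integrable (fun p : X × X => L p.1 p.2) (ν.prod μ) := by
    have h1 : ν.prod μ = (μ.prod ν).map (MeasurableEquiv.prodComm (α := X) (β := X)) := by
      rw [← Measure.prod_swap]; rfl
    rw [h1, integrable_map_equiv]
    exact hμν.congr (Filter.Eventually.of_forall fun p => (hsymm p.1 p.2))
  -- ρ.prod ρ decomposition
  have hprodρ : ρ.prod ρ = (((2:ℝ≥0)⁻¹ * (2:ℝ≥0)⁻¹ : ℝ≥0)) •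
      (μ.prod μ + μ.prod ν + (ν.prod μ + ν.prod ν)) := by
    rw [hρdef, smul_prod_smul, Measure.add_prod, Measure.prod_add, Measure.prod_add]
  have hLρ : Integrable (fun p : X × X => L p.1 p.2) (ρ.prod ρ) := by
    rw [hprodρ, nnsmul_eq]
    refine (integrable_smul_measure (by simp) ENNReal.coe_ne_top).mpr
      (((hμμ.add_measure hμν).add_measure (hνμ.add_measure hνν)))
  -- measurability
  have hgm : Measurable g := (Measure.measurable_rnDeriv μ ρ).ennreal_toReal
  have hhm : Measurable h := (Measure.measurable_rnDeriv ν ρ).ennreal_toReal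
  -- integrability of L * u∘fst * v∘snd for u,v ∈ {g,h}
  have hint4 : ∀ u v : X → ℝ, Measurable u → Measurable v →
      (∀ x, 0 ≤ u x) → (∀ x, 0 ≤ v x) →
      (∀ᵐ x ∂ρ, u x ≤ 2) → (∀ᵐ x ∂ρ, v x ≤ 2) →
      Integrable (fun p : X × X => L p.1 p.2 * u p.1 * v p.2) (ρ.prod ρ) := by
    intro u v hu hv hu0 hv0 hub hvb
    have hub' : ∀ᵐ p ∂(ρ.prod ρ), u p.1 ≤ 2 :=
      (Measure.quasiMeasurePreserving_fst).ae hub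
    have hvb' : ∀ᵐ p ∂(ρ.prod ρ), v p.2 ≤ 2 :=
      (Measure.quasiMeasurePreserving_snd).ae hvb
    refine Integrable.mono' ((hLρ.norm.const_mul 4)) ?_ ?_
    · exact (hLρ.aestronglyMeasurable.mul
        ((hu.comp measurable_fst).aestronglyMeasurable)).mul
        ((hv.comp measurable_snd).aestronglyMeasurable)
    · filter_upwards [hub', hvb'] with p hp1 hp2
      have : ‖L p.1 p.2 * u p.1 * v p.2‖ = ‖L p.1 p.2‖ * u p.1 * v p.2 := by
        rw [norm_mul, norm_mul, Real.norm_of_nonneg (hu0 _), Real.norm_of_nonneg (hv0 _)]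
      rw [this]
      calc ‖L p.1 p.2‖ * u p.1 * v p.2 ≤ ‖L p.1 p.2‖ * 2 * 2 := by
            apply mul_le_mul (mul_le_mul_of_nonneg_left hp1 (norm_nonneg _)) hp2 (hv0 _)
            positivity
        _ = 4 * ‖L p.1 p.2‖ := by ring
  have Igg := hint4 g g hgm hgm hg0 hg0 hgb hgb
  have Igh := hint4 g h hgm hhm hg0 hh0 hgb hhb
  have Ihg := hint4 h g hhm hgm hh0 hg0 hhb hgb
  have Ihh := hint4 h h hhm hhm hh0 hh0 hhb hhb
  -- values of the four integrals
  have Vgg := aux_int L ρ μ μ hμρ hμρ Igg hμμ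
  have Vgh := aux_int L ρ μ ν hμρ hνρ Igh hμν
  have Vhg := aux_int L ρ ν μ hνρ hμρ Ihg hνμ
  have Vhh := aux_int L ρ ν ν hνρ hνρ Ihh hνν
  -- ∫ L d(ν×μ) = ∫ L d(μ×ν)
  have hswapint : ∫ p, L p.1 p.2 ∂(ν.prod μ) = ∫ p, L p.1 p.2 ∂(μ.prod ν) := by
    have h1 : ν.prod μ = (μ.prod ν).map (MeasurableEquiv.prodComm (α := X) (β := X)) := by
      rw [← Measure.prod_swap]; rfl
    rw [h1, integral_map_equiv]
    exact integral_congr_ae (Filter.Eventually.of_forall fun p => (hsymm p.2 p.1))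
  set f : X → ℝ := fun x => g x - h x with hfdef
  have hfm : Measurable f := hgm.sub hhm
  have hexpand : (fun p : X × X => L p.1 p.2 * f p.1 * f p.2)
      = fun p : X × X => ((L p.1 p.2 * g p.1 * g p.2 - L p.1 p.2 * g p.1 * h p.2)
        - L p.1 p.2 * h p.1 * g p.2) + L p.1 p.2 * h p.1 * h p.2 := by
    funext p; simp only [hfdef]; ring
  have I1 : Integrable (fun p : X × X =>
      L p.1 p.2 * g p.1 * g p.2 - L p.1 p.2 * g p.1 * h p.2) (ρ.prod ρ) := Igg.sub Igh
  have I2 : Integrable (fun p : X × X =>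
      L p.1 p.2 * g p.1 * g p.2 - L p.1 p.2 * g p.1 * h p.2
        - L p.1 p.2 * h p.1 * g p.2) (ρ.prod ρ) := I1.sub Ihg
  have hintf : Integrable (fun p : X × X => L p.1 p.2 * f p.1 * f p.2) (ρ.prod ρ) := by
    rw [hexpand]; exact I2.add Ihh
  have hcalc : ∫ p, L p.1 p.2 * f p.1 * f p.2 ∂(ρ.prod ρ) = 0 := by
    rw [hexpand, integral_add I2 Ihh, integral_sub I1 Ihg, integral_sub Igg Igh]
    simp only [hgdef, hhdef] at Vgg Vgh Vhg Vhh ⊢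
    rw [Vgg, Vgh, Vhg, Vhh, hswapint]
    linarith
  have hf0 : (∫ x, f x ∂ρ) = 0 := by
    have hgint : Integrable g ρ := Measure.integrable_toReal_rnDeriv
    have hhint : Integrable h ρ := Measure.integrable_toReal_rnDeriv
    rw [show (fun x => f x) = fun x => g x - h x from rfl, integral_sub hgint hhint]
    simp only [hgdef, hhdef]
    rw [Measure.integral_toReal_rnDeriv hμρ, Measure.integral_toReal_rnDeriv hνρ]
    simp
  have hzero' := hstrong ρ hρprob f hfm hf0 hintf hcalc
  -- conclude rnDerivs equal a.e.
  have heqd : μ.rnDeriv ρ =ᵐ[ρ] ν.rnDeriv ρ := by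
    filter_upwards [hzero', Measure.rnDeriv_lt_top μ ρ, Measure.rnDeriv_lt_top ν ρ]
      with x hx h1 h2
    have : g x = h x := by
      have := sub_eq_zero.mp (by simpa [hfdef] using hx)
      simpa using this
    exact (ENNReal.toReal_eq_toReal_iff' h1.ne h2.ne).mp this
  calc μ = ρ.withDensity (μ.rnDeriv ρ) := (Measure.withDensity_rnDeriv_eq μ ρ hμρ).symm
    _ = ρ.withDensity (ν.rnDeriv ρ) := withDensity_congr_ae heqd
    _ = ν := Measure.withDensity_rnDeriv_eq ν ρ hνρ
end

section
/- The kernel L(x,y) = |x − y| on ℝ × ℝ is a negative definite kernel: for every n ∈ ℕ, all real weights w₁,…,wₙ with ∑ wᵢ = 0, and all x₁,…,xₙ ∈ ℝ, one has ∑ᵢ∑ⱼ |xᵢ − xⱼ| wᵢ wⱼ ≤ 0. -/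
open MeasureTheory Set

theorem stmt_2 (n : ℕ) (w : Fin n → ℝ) (hw : (∑ i, w i) = 0) (x : Fin n → ℝ) :
    (∑ i, ∑ j, |x i - x j| * w i * w j) ≤ 0 := by
  classical
  set f : Fin n → ℝ → ℝ := fun i t => if x i ≤ t then 1 else 0 with hf
  have hind : ∀ i j : Fin n, (fun t => (f i t - f j t)^2 * (w i * w j))
      = Set.indicator (Set.Ico (min (x i) (x j)) (max (x i) (x j)))
          (fun _ => w i * w j) := by
    intro i j
    funext t
    by_cases h1 : x i ≤ t <;> by_cases h2 : x j ≤ t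
    · rw [Set.indicator_of_notMem
        (fun hm => absurd (Set.mem_Ico.1 hm).2 (not_lt.2 (max_le h1 h2)))]
      simp [hf, h1, h2]
    · rw [Set.indicator_of_mem (Set.mem_Ico.2
        ⟨le_trans (min_le_left _ _) h1,
         lt_of_lt_of_le (lt_of_not_ge h2) (le_max_right _ _)⟩)]
      simp [hf, h1, h2]
    · rw [Set.indicator_of_mem (Set.mem_Ico.2
        ⟨le_trans (min_le_right _ _) h2,
         lt_of_lt_of_le (lt_of_not_ge h1) (le_max_left _ _)⟩)]
      simp [hf, h1, h2]
    · rw [Set.indicator_of_notMem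
        (fun hm => absurd (Set.mem_Ico.1 hm).1
          (not_le.2 (lt_min (lt_of_not_ge h1) (lt_of_not_ge h2))))]
      simp [hf, h1, h2]
  have hint : ∀ i j : Fin n,
      ∫ t, (f i t - f j t)^2 * (w i * w j) = |x i - x j| * (w i * w j) := by
    intro i j
    rw [hind i j, MeasureTheory.integral_indicator_const _ measurableSet_Ico,
      measureReal_def, Real.volume_Ico,
      ENNReal.toReal_ofReal (by simp [sub_nonneg, min_le_max]),
      max_sub_min_eq_abs, smul_eq_mul, abs_sub_comm (x j) (x i)]
  have hIib : ∀ i j : Fin n,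
      MeasureTheory.Integrable (fun t => (f i t - f j t)^2 * (w i * w j)) := by
    intro i j
    rw [hind i j]
    exact (integrable_indicator_iff measurableSet_Ico).2
      (integrableOn_const (by rw [Real.volume_Ico]; exact ENNReal.ofReal_ne_top))
  have key : ∀ t : ℝ, (∑ i, ∑ j, (f i t - f j t)^2 * (w i * w j))
      = -2 * (∑ i, w i * f i t)^2 := by
    intro t
    have hexp : ∀ i j : Fin n, (f i t - f j t)^2 * (w i * w j)
        = ((f i t)^2 * w i) * w j + w i * ((f j t)^2 * w j)
          - 2 * ((w i * f i t) * (w j * f j t)) := by intro i j; ring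
    simp_rw [hexp]
    simp only [Finset.sum_sub_distrib, Finset.sum_add_distrib, ← Finset.sum_mul,
      ← Finset.mul_sum, hw, mul_zero, zero_mul, Finset.sum_const_zero]
    ring
  have h1 : (∑ i, ∑ j, |x i - x j| * w i * w j)
      = ∫ t, ∑ i, ∑ j, (f i t - f j t)^2 * (w i * w j) := by
    rw [MeasureTheory.integral_finset_sum _ (fun i _ =>
      MeasureTheory.integrable_finset_sum _ (fun j _ => hIib i j))]
    refine Finset.sum_congr rfl fun i _ => ?_
    rw [MeasureTheory.integral_finset_sum _ (fun j _ => hIib i j)]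
    refine Finset.sum_congr rfl fun j _ => ?_
    rw [hint i j]; ring
  rw [h1]
  apply MeasureTheory.integral_nonpos
  intro t
  simp only [Pi.zero_apply]
  rw [key t]
  nlinarith [sq_nonneg (∑ i, w i * f i t)]
end

section
/- For any probability measures μ, ν on ℝ with finite first moments, the quantity N(μ,ν) = 2 E|X − Y| − E|X − X'| − E|Y − Y'|, where X, X' ~ μ and Y, Y' ~ ν are independent, is nonnegative, and equals zero if and only if μ = ν. -/
open MeasureTheory Set Filter ProbabilityTheory Topology

noncomputable def kf (p : ℝ × ℝ) (t : ℝ) : ENNReal :=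
  if (p.1 ≤ t ∧ t < p.2) ∨ (p.2 ≤ t ∧ t < p.1) then 1 else 0

lemma kf_meas : Measurable (Function.uncurry kf) := by
  have h1 : MeasurableSet {q : (ℝ × ℝ) × ℝ |
      (q.1.1 ≤ q.2 ∧ q.2 < q.1.2) ∨ (q.1.2 ≤ q.2 ∧ q.2 < q.1.1)} := by
    apply MeasurableSet.union
    · exact (measurableSet_le (measurable_fst.comp measurable_fst) measurable_snd).inter
        (measurableSet_lt measurable_snd (measurable_snd.comp measurable_fst))
    · exact (measurableSet_le (measurable_snd.comp measurable_fst) measurable_snd).inter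
        (measurableSet_lt measurable_snd (measurable_fst.comp measurable_fst))
  exact Measurable.ite h1 measurable_const measurable_const

lemma kf_int_t (p : ℝ × ℝ) : ∫⁻ t, kf p t = ENNReal.ofReal |p.1 - p.2| := by
  have h : kf p = (Ico p.1 p.2 ∪ Ico p.2 p.1).indicator (fun _ => 1) := by
    funext t
    simp only [kf, Set.indicator, mem_union, mem_Ico]
  rw [h, lintegral_indicator (measurableSet_Ico.union measurableSet_Ico)]
  rw [setLIntegral_one]
  rcases le_total p.1 p.2 with hc | hc
  · rw [union_eq_self_of_subset_right (by rw [Ico_eq_empty (not_lt.2 hc)]; exact empty_subset _),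
      Real.volume_Ico, abs_sub_comm, abs_of_nonneg (sub_nonneg.2 hc)]
  · rw [union_eq_self_of_subset_left (by rw [Ico_eq_empty (not_lt.2 hc)]; exact empty_subset _),
      Real.volume_Ico, abs_of_nonneg (sub_nonneg.2 hc)]

lemma kf_int_p (μ ν : Measure ℝ) [IsProbabilityMeasure μ] [IsProbabilityMeasure ν] (t : ℝ) :
    ∫⁻ p, kf p t ∂(μ.prod ν) = μ (Iic t) * ν (Ioi t) + μ (Ioi t) * ν (Iic t) := by
  have h : (fun p => kf p t)
      = (Iic t ×ˢ Ioi t ∪ Ioi t ×ˢ Iic t : Set (ℝ × ℝ)).indicator (fun _ => 1) := by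
    funext p
    simp only [kf, Set.indicator, mem_union, mem_prod, mem_Iic, mem_Ioi]
    congr 1; rw [and_comm (a := t < p.1)]
  rw [h, lintegral_indicator ((measurableSet_Iic.prod measurableSet_Ioi).union
    (measurableSet_Ioi.prod measurableSet_Iic)), setLIntegral_one,
    measure_union ?_ (measurableSet_Ioi.prod measurableSet_Iic),
    Measure.prod_prod, Measure.prod_prod]
  exact Disjoint.mono (prod_mono_left (subset_refl _)) (prod_mono_left (subset_refl _))
    (disjoint_left.2 (fun p hp hq => absurd (mem_Iic.1 hp.1) (not_le.2 (mem_Ioi.1 hq.1))))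

lemma lintA (μ ν : Measure ℝ) [IsProbabilityMeasure μ] [IsProbabilityMeasure ν] :
    ∫⁻ p, ENNReal.ofReal |p.1 - p.2| ∂(μ.prod ν)
      = ∫⁻ t, μ (Iic t) * ν (Ioi t) + μ (Ioi t) * ν (Iic t) := by
  calc ∫⁻ p, ENNReal.ofReal |p.1 - p.2| ∂(μ.prod ν)
      = ∫⁻ p, ∫⁻ t, kf p t ∂volume ∂(μ.prod ν) := by
        simp_rw [kf_int_t]
    _ = ∫⁻ t, ∫⁻ p, kf p t ∂(μ.prod ν) ∂volume :=
        lintegral_lintegral_swap kf_meas.aemeasurable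
    _ = ∫⁻ t, μ (Iic t) * ν (Ioi t) + μ (Ioi t) * ν (Iic t) := by
        simp_rw [kf_int_p μ ν]

lemma intXY (μ ν : Measure ℝ) [IsProbabilityMeasure μ] [IsProbabilityMeasure ν]
    (hμ : Integrable (fun x : ℝ => x) μ) (hν : Integrable (fun x : ℝ => x) ν) :
    Integrable (fun p : ℝ × ℝ => |p.1 - p.2|) (μ.prod ν) := by
  have h1 : Integrable (fun p : ℝ × ℝ => p.1) (μ.prod ν) := by
    have := (integrable_map_measure (μ := μ.prod ν) (f := Prod.fst) (g := fun x : ℝ => x)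
      aestronglyMeasurable_id measurable_fst.aemeasurable)
    rw [Measure.map_fst_prod] at this
    exact this.1 (by simpa using hμ)
  have h2 : Integrable (fun p : ℝ × ℝ => p.2) (μ.prod ν) := by
    have := (integrable_map_measure (μ := μ.prod ν) (f := Prod.snd) (g := fun x : ℝ => x)
      aestronglyMeasurable_id measurable_snd.aemeasurable)
    rw [Measure.map_snd_prod] at this
    exact this.1 (by simpa using hν)
  exact (h1.sub h2).abs

lemma measIic (μ : Measure ℝ) : Measurable fun t => μ (Iic t) :=
  Monotone.measurable (fun _ _ hab => measure_mono (Iic_subset_Iic.2 hab))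

lemma IoiToReal (μ : Measure ℝ) [IsProbabilityMeasure μ] (t : ℝ) :
    (μ (Ioi t)).toReal = 1 - (μ (Iic t)).toReal := by
  rw [← compl_Iic, prob_compl_eq_one_sub measurableSet_Iic,
    ENNReal.toReal_sub_of_le prob_le_one ENNReal.one_ne_top, ENNReal.toReal_one]

lemma hEq (μ ν : Measure ℝ) [IsProbabilityMeasure μ] [IsProbabilityMeasure ν] (t : ℝ) :
    (μ (Iic t) * ν (Ioi t) + μ (Ioi t) * ν (Iic t)).toReal
      = (μ (Iic t)).toReal * (1 - (ν (Iic t)).toReal)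
        + (1 - (μ (Iic t)).toReal) * (ν (Iic t)).toReal := by
  rw [ENNReal.toReal_add (by finiteness) (by finiteness), ENNReal.toReal_mul, ENNReal.toReal_mul,
    IoiToReal, IoiToReal]

lemma measH (μ ν : Measure ℝ) :
    Measurable fun t => μ (Iic t) * ν (Ioi t) + μ (Ioi t) * ν (Iic t) := by
  have hμ' : Measurable fun t => μ (Ioi t) :=
    Antitone.measurable (fun _ _ hab => measure_mono (Ioi_subset_Ioi hab))
  have hν' : Measurable fun t => ν (Ioi t) :=
    Antitone.measurable (fun _ _ hab => measure_mono (Ioi_subset_Ioi hab))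
  exact ((measIic μ).mul hν').add (hμ'.mul (measIic ν))

lemma finA (μ ν : Measure ℝ) [IsProbabilityMeasure μ] [IsProbabilityMeasure ν]
    (hint : Integrable (fun p : ℝ × ℝ => |p.1 - p.2|) (μ.prod ν)) :
    ∫⁻ t, μ (Iic t) * ν (Ioi t) + μ (Ioi t) * ν (Iic t) ≠ ⊤ := by
  rw [← lintA]
  have := hint.2
  rw [HasFiniteIntegral] at this
  simp_rw [← ofReal_norm, Real.norm_eq_abs, abs_abs] at this
  exact this.ne

lemma realA (μ ν : Measure ℝ) [IsProbabilityMeasure μ] [IsProbabilityMeasure ν]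
    (hint : Integrable (fun p : ℝ × ℝ => |p.1 - p.2|) (μ.prod ν)) :
    ∫ p, |p.1 - p.2| ∂(μ.prod ν)
      = ∫ t, ((μ (Iic t)).toReal * (1 - (ν (Iic t)).toReal)
          + (1 - (μ (Iic t)).toReal) * (ν (Iic t)).toReal) := by
  rw [integral_eq_lintegral_of_nonneg_ae (Filter.Eventually.of_forall fun p => abs_nonneg _)
    hint.aestronglyMeasurable, lintA,
    ← integral_toReal (measH μ ν).aemeasurable (Filter.Eventually.of_forall fun t => by finiteness)]
  exact integral_congr_ae (Filter.Eventually.of_forall fun t => hEq μ ν t)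

lemma intgA (μ ν : Measure ℝ) [IsProbabilityMeasure μ] [IsProbabilityMeasure ν]
    (hint : Integrable (fun p : ℝ × ℝ => |p.1 - p.2|) (μ.prod ν)) :
    Integrable (fun t => (μ (Iic t)).toReal * (1 - (ν (Iic t)).toReal)
      + (1 - (μ (Iic t)).toReal) * (ν (Iic t)).toReal) (volume : Measure ℝ) := by
  exact (integrable_toReal_of_lintegral_ne_top (measH μ ν).aemeasurable
    (finA μ ν hint)).congr (Filter.Eventually.of_forall fun t => hEq μ ν t)

lemma rc_ae_eq (f g : StieltjesFunction ℝ)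
    (h : ∀ᵐ t ∂(volume : Measure ℝ), f t = g t) : ∀ t, f t = g t := by
  intro t
  set S : Set ℝ := {t | f t = g t} with hS
  have hclo : t ∈ closure (S ∩ Ioi t) := by
    rw [mem_closure_iff]
    intro o ho hto
    obtain ⟨ε, hε, hball⟩ := Metric.isOpen_iff.1 ho t hto
    by_contra hcon
    have hsub : Ioo t (t + ε) ⊆ Sᶜ := by
      intro s hs hsS
      exact hcon ⟨s, hball (by
        rw [Real.ball_eq_Ioo]
        exact Ioo_subset_Ioo (by linarith) le_rfl hs), hsS, hs.1⟩
    have : volume (Ioo t (t + ε)) = 0 :=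
      measure_mono_null hsub (ae_iff.1 h)
    rw [Real.volume_Ioo] at this
    simp only [ENNReal.ofReal_eq_zero] at this
    linarith
  have hne : (𝓝[S ∩ Ioi t] t).NeBot := mem_closure_iff_nhdsWithin_neBot.1 hclo
  have hmono : 𝓝[S ∩ Ioi t] t ≤ 𝓝[Ici t] t :=
    nhdsWithin_mono t (fun s hs => mem_Ici.2 (le_of_lt hs.2))
  have hf : Tendsto f (𝓝[S ∩ Ioi t] t) (𝓝 (f t)) := (f.right_continuous t).mono_left hmono
  have hg : Tendsto g (𝓝[S ∩ Ioi t] t) (𝓝 (g t)) := (g.right_continuous t).mono_left hmono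
  have heq : f =ᶠ[𝓝[S ∩ Ioi t] t] g :=
    eventually_nhdsWithin_of_forall (fun s hs => hs.1)
  exact tendsto_nhds_unique (hf.congr' heq) hg

theorem stmt_3 (μ ν : Measure ℝ) [IsProbabilityMeasure μ] [IsProbabilityMeasure ν]
    (hμ : Integrable (fun x : ℝ => x) μ) (hν : Integrable (fun x : ℝ => x) ν) :
    0 ≤ 2 * ∫ p, |p.1 - p.2| ∂(μ.prod ν)
      - ∫ p, |p.1 - p.2| ∂(μ.prod μ)
      - ∫ p, |p.1 - p.2| ∂(ν.prod ν) ∧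
    (2 * ∫ p, |p.1 - p.2| ∂(μ.prod ν)
      - ∫ p, |p.1 - p.2| ∂(μ.prod μ)
      - ∫ p, |p.1 - p.2| ∂(ν.prod ν) = 0 ↔ μ = ν) := by
  have hμν := intXY μ ν hμ hν
  have hμμ := intXY μ μ hμ hμ
  have hνν := intXY ν ν hν hν
  set F : ℝ → ℝ := fun t => (μ (Iic t)).toReal with hF
  set G : ℝ → ℝ := fun t => (ν (Iic t)).toReal with hG
  have i1 := intgA μ ν hμν
  have i2 := intgA μ μ hμμ
  have i3 := intgA ν ν hνν
  have key : 2 * ∫ p, |p.1 - p.2| ∂(μ.prod ν)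
      - ∫ p, |p.1 - p.2| ∂(μ.prod μ)
      - ∫ p, |p.1 - p.2| ∂(ν.prod ν)
      = ∫ t, 2 * (F t - G t) ^ 2 := by
    rw [realA μ ν hμν, realA μ μ hμμ, realA ν ν hνν]
    have hA : Integrable (fun t => 2 * ((μ (Iic t)).toReal * (1 - (ν (Iic t)).toReal)
        + (1 - (μ (Iic t)).toReal) * (ν (Iic t)).toReal)
        - ((μ (Iic t)).toReal * (1 - (μ (Iic t)).toReal)
          + (1 - (μ (Iic t)).toReal) * (μ (Iic t)).toReal)) (volume : Measure ℝ) :=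
      (i1.const_mul 2).sub i2
    have h1 : (fun t => 2 * (F t - G t) ^ 2)
        = fun t => (2 * ((μ (Iic t)).toReal * (1 - (ν (Iic t)).toReal)
            + (1 - (μ (Iic t)).toReal) * (ν (Iic t)).toReal)
          - ((μ (Iic t)).toReal * (1 - (μ (Iic t)).toReal)
            + (1 - (μ (Iic t)).toReal) * (μ (Iic t)).toReal))
          - ((ν (Iic t)).toReal * (1 - (ν (Iic t)).toReal)
            + (1 - (ν (Iic t)).toReal) * (ν (Iic t)).toReal) := by
      funext t; simp only [hF, hG]; ring
    rw [h1, integral_sub hA i3, integral_sub (i1.const_mul 2) i2, integral_const_mul]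
  have hker : Integrable (fun t => 2 * (F t - G t) ^ 2) (volume : Measure ℝ) :=
    (((i1.const_mul 2).sub i2).sub i3).congr
      (Filter.Eventually.of_forall fun t => by
        simp only [hF, hG, Pi.sub_apply]; ring)
  constructor
  · rw [key]
    exact integral_nonneg fun t => by positivity
  · constructor
    · intro h0
      rw [key] at h0
      have hae : ∀ᵐ t ∂(volume : Measure ℝ), 2 * (F t - G t) ^ 2 = 0 :=
        (integral_eq_zero_iff_of_nonneg (fun t => by positivity) hker).1 h0
      have haeFG : ∀ᵐ t ∂(volume : Measure ℝ), cdf μ t = cdf ν t := by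
        filter_upwards [hae] with t ht
        have : F t = G t := by nlinarith [sq_nonneg (F t - G t)]
        rw [cdf_eq_real, cdf_eq_real]
        exact this
      exact Measure.eq_of_cdf μ ν (StieltjesFunction.ext (rc_ae_eq _ _ haeFG))
    · intro h
      subst h
      ring
end
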